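/- Let R be a commutative ring, 𝓛 a finite set, and a, b two distinct elements not belonging to 𝓛. Then the square formed by the canonical maps E(𝓛) → E(𝓛 ∪ {a}) → E(𝓛 ∪ {a, b}) and E(𝓛) → E(𝓛 ∪ {b}) → E(𝓛 ∪ {a, b}) anticommutes: the sum of the two composite R-module homomorphisms E(𝓛) → E(𝓛 ∪ {a, b}) is zero. -/

import Mathlib

/-- A complete ordering of the finite set `𝓛`. -/
abbrev Ordering' (A : Type) [DecidableEq A] (S : Finset A) : Type :=
  Fin S.card ≃ {x // x ∈ S}

/-- `(-1)^{p(x,y)}`, the sign of the permutation `y⁻¹ ∘ x` relating two orderings. -/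
def sgn {A : Type} [DecidableEq A] {S : Finset A} (x y : Ordering' A S) : ℤˣ :=
  Equiv.Perm.sign (x.trans y.symm)

/-- The submodule of relations `x - (-1)^{p(x,y)} y`. -/
noncomputable def relSet (R : Type) [CommRing R] (A : Type) [DecidableEq A] (S : Finset A) :
    Submodule R (Ordering' A S →₀ R) :=
  Submodule.span R
    {f | ∃ x y : Ordering' A S,
      f = Finsupp.single x 1 - ((sgn x y : ℤ) : R) • Finsupp.single y 1}

/-- `E(𝓛)`: the quotient of the free `R`-module on the orderings of `𝓛`
by the relations `x = (-1)^{p(x,y)} y`. -/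
abbrev E (R : Type) [CommRing R] (A : Type) [DecidableEq A] (S : Finset A) : Type :=
  (Ordering' A S →₀ R) ⧸ relSet R A S

/-- The ordering `xa` of `𝓛 ∪ {a}` obtained from an ordering `x` of `𝓛`
by appending `a` as the last element. -/
def appendOrd {A : Type} [DecidableEq A] {S : Finset A} {a : A} (ha : a ∉ S)
    (x : Ordering' A S) : Ordering' A (insert a S) :=
  (finCongr (by rw [Finset.card_insert_of_notMem ha])).trans
    (finSuccEquivLast.trans (x.optionCongr.trans (Finset.subtypeInsertEquivOption ha).symm))

theorem notMemInsert {A : Type} [DecidableEq A] {X : Finset A} {a b : A}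
    (hb : b ∉ X) (hab : a ≠ b) : b ∉ insert a X :=
  fun h => (Finset.mem_insert.mp h).elim (fun h' => hab h'.symm) hb

/-! ### Auxiliary lemmas -/

lemma appendOrd_coe_lt {A : Type} [DecidableEq A] {S : Finset A} {a : A} (ha : a ∉ S)
    (x : Ordering' A S) (k : Fin (insert a S).card) (hk : k.val < S.card) :
    ((appendOrd ha x k : A)) = (x ⟨k.val, hk⟩ : A) := by
  have h1 : (finCongr (by rw [Finset.card_insert_of_notMem ha] :
      (insert a S).card = S.card + 1) k) = Fin.castSucc ⟨k.val, hk⟩ := by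
    ext; simp
  have h2 : finSuccEquivLast (finCongr (by rw [Finset.card_insert_of_notMem ha] :
      (insert a S).card = S.card + 1) k) = some ⟨k.val, hk⟩ := by
    rw [h1, finSuccEquivLast_castSucc]
  simp only [appendOrd, Equiv.trans_apply, h2, Equiv.optionCongr_apply, Option.map_some]
  rfl

lemma appendOrd_coe_last {A : Type} [DecidableEq A] {S : Finset A} {a : A} (ha : a ∉ S)
    (x : Ordering' A S) (k : Fin (insert a S).card) (hk : k.val = S.card) :
    ((appendOrd ha x k : A)) = a := by
  have h1 : (finCongr (by rw [Finset.card_insert_of_notMem ha] :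
      (insert a S).card = S.card + 1) k) = Fin.last S.card := by
    ext; simp [hk]
  have h2 : finSuccEquivLast (finCongr (by rw [Finset.card_insert_of_notMem ha] :
      (insert a S).card = S.card + 1) k) = none := by
    rw [h1, finSuccEquivLast_last]
  simp only [appendOrd, Equiv.trans_apply, h2, Equiv.optionCongr_apply, Option.map_none]
  rfl

/-- Transport of orderings along an equality of finsets. -/
def castOrd {A : Type} [DecidableEq A] {S1 S2 : Finset A} (h : S1 = S2)
    (y : Ordering' A S1) : Ordering' A S2 := h ▸ y

lemma castOrd_coe {A : Type} [DecidableEq A] {S1 S2 : Finset A} (h : S1 = S2)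
    (y : Ordering' A S1) (k : Fin S2.card) :
    ((castOrd h y k : A)) = (y ⟨k.val, by rw [h]; exact k.isLt⟩ : A) := by
  subst h; rfl

/-- Transport on `E` as a linear map. -/
noncomputable def castE (R : Type) [CommRing R] (A : Type) [DecidableEq A] {S1 S2 : Finset A}
    (h : S1 = S2) : E R A S1 →ₗ[R] E R A S2 := h ▸ LinearMap.id

lemma castE_apply (R : Type) [CommRing R] (A : Type) [DecidableEq A] {S1 S2 : Finset A}
    (h : S1 = S2) (v : E R A S1) :
    castE R A h v = cast (congrArg (E R A) h) v := by
  subst h; rfl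

lemma castE_mk_single (R : Type) [CommRing R] (A : Type) [DecidableEq A] {S1 S2 : Finset A}
    (h : S1 = S2) (y : Ordering' A S1) :
    castE R A h (Submodule.Quotient.mk (Finsupp.single y 1)) =
      Submodule.Quotient.mk (Finsupp.single (castOrd h y) 1) := by
  subst h; rfl

lemma sgn_eq_neg_one {A : Type} [DecidableEq A] {S : Finset A}
    (y1 y2 : Ordering' A S) (i j : Fin S.card) (hij : i ≠ j)
    (h : ∀ k, (y1 k : A) = (y2 (Equiv.swap i j k) : A)) :
    sgn y1 y2 = -1 := by
  have heq : y1.trans y2.symm = Equiv.swap i j := by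
    apply Equiv.ext
    intro k
    simp only [Equiv.trans_apply]
    rw [Subtype.ext (h k), Equiv.symm_apply_apply]
  rw [sgn, heq, Equiv.Perm.sign_swap hij]

lemma mk_add_mk_eq_zero (R : Type) [CommRing R] (A : Type) [DecidableEq A] {S : Finset A}
    (y1 y2 : Ordering' A S) (hs : sgn y1 y2 = -1) :
    (Submodule.Quotient.mk (Finsupp.single y1 1) : E R A S) +
      Submodule.Quotient.mk (Finsupp.single y2 1) = 0 := by
  rw [← Submodule.Quotient.mk_add, Submodule.Quotient.mk_eq_zero]
  apply Submodule.subset_span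
  refine ⟨y1, y2, ?_⟩
  rw [hs]
  push_cast
  simp [sub_eq_add_neg]

/-- The square formed by the canonical maps `E(𝓛) → E(𝓛 ∪ {a}) → E(𝓛 ∪ {a,b})`
and `E(𝓛) → E(𝓛 ∪ {b}) → E(𝓛 ∪ {a,b})` anticommutes: the sum of the two
composite `R`-module homomorphisms `E(𝓛) → E(𝓛 ∪ {a,b})` is zero.
(The canonical maps are characterized by being induced by appending an element
as the last element of an ordering.) -/
theorem E_square_anticommutes (R : Type) [CommRing R] (A : Type) [DecidableEq A]
    (S : Finset A) (a b : A) (ha : a ∉ S) (hb : b ∉ S) (hab : a ≠ b)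
    (φa : E R A S →ₗ[R] E R A (insert a S))
    (φb : E R A S →ₗ[R] E R A (insert b S))
    (φab : E R A (insert a S) →ₗ[R] E R A (insert b (insert a S)))
    (φba : E R A (insert b S) →ₗ[R] E R A (insert a (insert b S)))
    (hφa : ∀ x : Ordering' A S,
      φa (Submodule.Quotient.mk (Finsupp.single x 1)) =
        Submodule.Quotient.mk (Finsupp.single (appendOrd ha x) 1))
    (hφb : ∀ x : Ordering' A S,
      φb (Submodule.Quotient.mk (Finsupp.single x 1)) =
        Submodule.Quotient.mk (Finsupp.single (appendOrd hb x) 1))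
    (hφab : ∀ x : Ordering' A (insert a S),
      φab (Submodule.Quotient.mk (Finsupp.single x 1)) =
        Submodule.Quotient.mk (Finsupp.single (appendOrd (notMemInsert hb hab) x) 1))
    (hφba : ∀ x : Ordering' A (insert b S),
      φba (Submodule.Quotient.mk (Finsupp.single x 1)) =
        Submodule.Quotient.mk (Finsupp.single (appendOrd (notMemInsert ha hab.symm) x) 1)) :
    ∀ v : E R A S,
      cast (congrArg (E R A) (Finset.insert_comm b a S)) (φab (φa v)) + φba (φb v) = 0 := by
  intro v
  have hcomm : insert b (insert a S) = insert a (insert b S) := Finset.insert_comm b a S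
  rw [← castE_apply R A hcomm]
  -- cardinalities
  have hcaS : (insert a S).card = S.card + 1 := Finset.card_insert_of_notMem ha
  have hcbS : (insert b S).card = S.card + 1 := Finset.card_insert_of_notMem hb
  have hcab : (insert a (insert b S)).card = S.card + 2 := by
    rw [Finset.card_insert_of_notMem (notMemInsert ha hab.symm), hcbS]
  -- key computation on generators
  have key : ∀ x : Ordering' A S,
      castE R A hcomm (φab (φa (Submodule.Quotient.mk (Finsupp.single x 1)))) +
        φba (φb (Submodule.Quotient.mk (Finsupp.single x 1))) = 0 := by
    intro x
    rw [hφa, hφab, hφb, hφba, castE_mk_single]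
    set y1 : Ordering' A (insert a (insert b S)) :=
      castOrd hcomm (appendOrd (notMemInsert hb hab) (appendOrd ha x)) with hy1def
    set y2 : Ordering' A (insert a (insert b S)) :=
      appendOrd (notMemInsert ha hab.symm) (appendOrd hb x) with hy2def
    apply mk_add_mk_eq_zero
    have hilt : S.card < (insert a (insert b S)).card := by rw [hcab]; omega
    have hjlt : S.card + 1 < (insert a (insert b S)).card := by rw [hcab]; omega
    apply sgn_eq_neg_one y1 y2 ⟨S.card, hilt⟩ ⟨S.card + 1, hjlt⟩
      (Fin.ne_of_val_ne (show S.card ≠ S.card + 1 by omega))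
    intro k
    have hkba : k.val < (insert b (insert a S)).card := by rw [hcomm]; exact k.isLt
    have hy1 : (y1 k : A) =
        ((appendOrd (notMemInsert hb hab) (appendOrd ha x)) ⟨k.val, hkba⟩ : A) :=
      castOrd_coe _ _ _
    rcases Nat.lt_trichotomy k.val S.card with hk | hk | hk
    · -- k < n : swap fixes k, both sides are x k
      have hsw : Equiv.swap (⟨S.card, hilt⟩ : Fin _) ⟨S.card + 1, hjlt⟩ k = k := by
        apply Equiv.swap_apply_of_ne_of_ne
        · exact Fin.ne_of_val_ne (show k.val ≠ S.card by omega)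
        · exact Fin.ne_of_val_ne (show k.val ≠ S.card + 1 by omega)
      have hka : k.val < (insert a S).card := by rw [hcaS]; omega
      have hkb : k.val < (insert b S).card := by rw [hcbS]; omega
      have e1 : (y1 k : A) = (x ⟨k.val, hk⟩ : A) :=
        hy1.trans ((appendOrd_coe_lt (notMemInsert hb hab) (appendOrd ha x)
            ⟨k.val, hkba⟩ hka).trans
          (appendOrd_coe_lt ha x ⟨k.val, hka⟩ hk))
      have e2 : (y2 k : A) = (x ⟨k.val, hk⟩ : A) :=
        (appendOrd_coe_lt (notMemInsert ha hab.symm) (appendOrd hb x) k hkb).trans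
          (appendOrd_coe_lt hb x ⟨k.val, hkb⟩ hk)
      rw [hsw, e1, e2]
    · -- k = n : y1 k = a, y2 (swap k) = a
      have hki : k = (⟨S.card, hilt⟩ : Fin _) := Fin.ext hk
      have hsw : Equiv.swap (⟨S.card, hilt⟩ : Fin _) ⟨S.card + 1, hjlt⟩ k =
          ⟨S.card + 1, hjlt⟩ := by rw [hki, Equiv.swap_apply_left]
      have hka : k.val < (insert a S).card := by rw [hcaS]; omega
      have e1 : (y1 k : A) = a :=
        hy1.trans ((appendOrd_coe_lt (notMemInsert hb hab) (appendOrd ha x)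
            ⟨k.val, hkba⟩ hka).trans
          (appendOrd_coe_last ha x ⟨k.val, hka⟩ hk))
      have e2 : (y2 ⟨S.card + 1, hjlt⟩ : A) = a :=
        appendOrd_coe_last (notMemInsert ha hab.symm) (appendOrd hb x)
          ⟨S.card + 1, hjlt⟩ hcbS.symm
      rw [hsw, e1, e2]
    · -- k = n + 1 : y1 k = b, y2 (swap k) = b
      have hk' : k.val = S.card + 1 := by
        have h2 : k.val < S.card + 2 := lt_of_lt_of_eq k.isLt hcab; omega
      have hkj : k = (⟨S.card + 1, hjlt⟩ : Fin _) := Fin.ext hk'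
      have hsw : Equiv.swap (⟨S.card, hilt⟩ : Fin _) ⟨S.card + 1, hjlt⟩ k =
          ⟨S.card, hilt⟩ := by rw [hkj, Equiv.swap_apply_right]
      have hka : k.val = (insert a S).card := by rw [hcaS]; omega
      have e1 : (y1 k : A) = b :=
        hy1.trans (appendOrd_coe_last (notMemInsert hb hab) (appendOrd ha x)
          ⟨k.val, hkba⟩ hka)
      have hib : S.card < (insert b S).card := by rw [hcbS]; omega
      have e2 : (y2 ⟨S.card, hilt⟩ : A) = b :=
        (appendOrd_coe_lt (notMemInsert ha hab.symm) (appendOrd hb x)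
            ⟨S.card, hilt⟩ hib).trans
          (appendOrd_coe_last hb x ⟨S.card, hib⟩ rfl)
      rw [hsw, e1, e2]
  -- extend from generators by linearity
  obtain ⟨f, rfl⟩ := Submodule.Quotient.mk_surjective _ v
  induction f using Finsupp.induction_linear with
  | zero => simp
  | add f g hf hg =>
      rw [Submodule.Quotient.mk_add]
      simp only [map_add]
      rw [add_add_add_comm, hf, hg, add_zero]
  | single x r =>
      have : (Finsupp.single x r : Ordering' A S →₀ R) = r • Finsupp.single x 1 := by
        rw [Finsupp.smul_single, smul_eq_mul, mul_one]
      rw [this, Submodule.Quotient.mk_smul]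
      simp only [map_smul, ← smul_add]
      rw [key x, smul_zero]
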